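/- arXiv:2104.12867 — 2 statements merged into one kernel-verified Lean document; each statement's English description precedes it below -/
import Mathlib

section
/- Let A be an equidimensional, catenary Noetherian local ring of dimension n, and let a be an element of the maximal ideal avoiding all minimal primes. Then every maximal ideal of A_a has height n - 1. -/
open IsLocalRing

section Artin

variable {C : Type*} [CommRing C]

/-- A f.g. module killed by a maximal ideal is Artinian. -/
lemma isArtinian_of_maximal_le_ann {M : Type*} [AddCommGroup M] [Module C M]
    [Module.Finite C M] (m : Ideal C) (hm : m.IsMaximal)
    (hk : m ≤ Module.annihilator C M) : IsArtinian C M := by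
  have htor : Module.IsTorsionBySet C M (m : Set C) := by
    rw [Module.isTorsionBySet_iff_subseteq_ker_lsmul]
    intro c hc
    rw [SetLike.mem_coe, LinearMap.mem_ker]
    ext x
    simpa using Module.mem_annihilator.mp (hk hc) x
  letI : Module (C ⧸ m) M := htor.module
  haveI : IsScalarTower C (C ⧸ m) M := htor.isScalarTower
  letI : Field (C ⧸ m) := Ideal.Quotient.field m
  haveI : Module.Finite (C ⧸ m) M := Module.Finite.of_restrictScalars_finite C _ _
  haveI hart : IsArtinian (C ⧸ m) M := isArtinian_of_fg_of_artinian' (R := C ⧸ m)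
  -- transfer well-foundedness along the map of submodule lattices
  rw [isArtinian_iff]
  let F : Submodule C M → Submodule (C ⧸ m) M := fun W =>
    { carrier := W
      add_mem' := fun ha hb => W.add_mem ha hb
      zero_mem' := W.zero_mem
      smul_mem' := by
        intro c x hx
        obtain ⟨c', rfl⟩ := Ideal.Quotient.mk_surjective c
        have : (Ideal.Quotient.mk m c') • x = c' • x := htor.mk_smul c' x
        rw [this]
        exact W.smul_mem c' hx }
  have hF : ∀ {W W' : Submodule C M}, F W < F W' → W < W' := by
    intro W W' h
    rw [lt_iff_le_and_ne] at h ⊢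
    refine ⟨fun y hy => h.1 hy, fun e => h.2 (by simp [F, e])⟩
  have := (isArtinian_iff _ _).mp hart
  exact Subrelation.wf (fun {W W'} h => hF h) (InvImage.wf F this)

lemma isArtinian_of_pow_maximal_le_ann (m : Ideal C) (hm : m.IsMaximal) [IsNoetherianRing C] :
    ∀ (k : ℕ) (M : Type _) [AddCommGroup M] [Module C M] [Module.Finite C M],
    m ^ k ≤ Module.annihilator C M → IsArtinian C M := by
  intro k
  induction k with
  | zero =>
    intro M _ _ _ hk
    have : (⊤ : Ideal C) ≤ Module.annihilator C M := by simpa using hk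
    haveI : Subsingleton M := by
      constructor
      intro x y
      have h1 : (1 : C) ∈ Module.annihilator C M := this Submodule.mem_top
      have hx := Module.mem_annihilator.mp h1 x
      have hy := Module.mem_annihilator.mp h1 y
      simp only [one_smul] at hx hy
      rw [hx, hy]
    infer_instance
  | succ k ih =>
    intro M _ _ _ hk
    haveI : IsNoetherian C M := isNoetherian_of_isNoetherianRing_of_finite C M
    set S : Submodule C M := m ^ k • ⊤ with hS
    rw [isArtinian_iff_submodule_quotient S]
    constructor
    · -- S is killed by m
      haveI : Module.Finite C S := Module.Finite.iff_fg.mpr (IsNoetherian.noetherian S)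
      refine isArtinian_of_maximal_le_ann m hm ?_
      intro c hc
      rw [Module.mem_annihilator]
      rintro ⟨x, hx⟩
      have : c • x = 0 := by
        have hmem : c • x ∈ m ^ (k + 1) • (⊤ : Submodule C M) := by
          rw [pow_succ, mul_comm, mul_smul]
          exact Submodule.smul_mem_smul hc hx
        have : m ^ (k+1) • (⊤ : Submodule C M) = ⊥ := by
          rw [Submodule.eq_bot_iff]
          intro y hy
          refine Submodule.smul_induction_on hy (fun c hc y _ => ?_) (fun y z hy hz => by
            rw [hy, hz, add_zero])
          exact Module.mem_annihilator.mp (hk hc) y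
        rw [this] at hmem
        simpa using hmem
      ext
      simpa [Submodule.coe_smul_of_tower] using this
    · -- M ⧸ S is killed by m ^ k
      refine ih (M ⧸ S) ?_
      intro c hc
      rw [Module.mem_annihilator]
      intro y
      obtain ⟨y', rfl⟩ := Submodule.Quotient.mk_surjective S y
      rw [← Submodule.Quotient.mk_smul, Submodule.Quotient.mk_eq_zero]
      exact Submodule.smul_mem_smul hc Submodule.mem_top

end Artin



section PIT
open IsLocalRing

variable {C : Type*} [CommRing C] [IsNoetherianRing C] [IsLocalRing C]



lemma PITlocal (q₁ P : Ideal C) (hq₁ : q₁.IsPrime) (hP : P.IsPrime) (x : C)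
    (hxm : x ∈ maximalIdeal C)
    (huniq : ∀ p : Ideal C, p.IsPrime → q₁ ≤ p → x ∈ p → p = maximalIdeal C)
    (hPm : P ≠ maximalIdeal C) (hq₁P : q₁ ≤ P) : P ≤ q₁ := by
  classical
  have hxP : x ∉ P := fun h => hPm (huniq P hP hq₁P h)
  set J : Ideal C := q₁ ⊔ Ideal.span {x} with hJ
  have hq₁J : q₁ ≤ J := le_sup_left
  have hxJ : x ∈ J := Submodule.mem_sup_right (Ideal.mem_span_singleton_self x)
  have hradJ : J.radical = maximalIdeal C := by
    rw [Ideal.radical_eq_sInf]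
    have : {p : Ideal C | J ≤ p ∧ p.IsPrime} = {maximalIdeal C} := by
      ext p
      constructor
      · rintro ⟨hle, hp⟩
        exact huniq p hp (hq₁J.trans hle) (hle hxJ)
      · rintro rfl
        refine ⟨sup_le (le_maximalIdeal hq₁.ne_top) ?_, (maximalIdeal.isMaximal C).isPrime⟩
        rw [Ideal.span_le, Set.singleton_subset_iff]
        exact hxm
    rw [this, sInf_singleton]
  obtain ⟨k, hk⟩ : ∃ k, maximalIdeal C ^ k ≤ J := by
    obtain ⟨k, hk⟩ := Ideal.exists_radical_pow_le_of_fg J (IsNoetherian.noetherian _)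
    exact ⟨k, by rwa [hradJ] at hk⟩
  -- the localization at P
  set D := Localization.AtPrime P with hD
  set g : C →+* D := algebraMap C D with hg
  -- symbolic-type powers
  set Q : ℕ → Ideal C := fun n => Ideal.comap g (Ideal.map g (q₁ ⊔ P ^ n)) with hQdef
  have hQanti : ∀ n, Q (n + 1) ≤ Q n := by
    intro n
    exact Ideal.comap_mono (Ideal.map_mono (sup_le_sup_left
      (Ideal.pow_le_pow_right (Nat.le_succ n)) _))
  have hq₁Q : ∀ n, q₁ ≤ Q n := fun n => le_sup_left.trans Ideal.le_comap_map
  -- Artinian quotient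
  haveI : IsNoetherian C (C ⧸ (J : Submodule C C)) := inferInstance
  haveI : Module.Finite C (C ⧸ (J : Submodule C C)) :=
    Module.finite_def.mpr (IsNoetherian.noetherian ⊤)
  haveI hart : IsArtinian C (C ⧸ (J : Submodule C C)) := by
    refine isArtinian_of_pow_maximal_le_ann (maximalIdeal C) (maximalIdeal.isMaximal C) k _ ?_
    intro c hc
    rw [Module.mem_annihilator]
    intro y
    obtain ⟨y', rfl⟩ := Submodule.Quotient.mk_surjective _ y
    rw [← Submodule.Quotient.mk_smul, Submodule.Quotient.mk_eq_zero]
    rw [smul_eq_mul]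
    exact Ideal.mul_mem_right y' J (hk hc)
  -- stabilization
  have hQanti' : ∀ i j, i ≤ j → Q j ≤ Q i := by
    intro i j hij
    induction hij with
    | refl => exact le_refl _
    | step h ih => exact le_trans (hQanti _) ih
  obtain ⟨n, hn⟩ := IsArtinian.monotone_stabilizes (R := C) (M := C ⧸ (J : Submodule C C))
    (⟨fun n => Submodule.map (Submodule.mkQ (J : Submodule C C)) (Q n : Submodule C C),
      fun i j hij => Submodule.map_mono (hQanti' i j hij)⟩ : ℕ →o (Submodule C (C ⧸ (J : Submodule C C)))ᵒᵈ)
  have key : Q n ⊔ J = Q (n + 1) ⊔ J := by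
    have := hn (n + 1) (Nat.le_succ n)
    have h2 := congrArg (Submodule.comap (Submodule.mkQ (J : Submodule C C))) this
    change Submodule.comap _ (Submodule.map _ (Q n)) =
      Submodule.comap _ (Submodule.map _ (Q (n + 1))) at h2
    simpa [Submodule.comap_map_eq, Submodule.ker_mkQ] using h2
  -- Q n = Q (n+1)
  have hQeq : Q n = Q (n + 1) := by
    refine le_antisymm ?_ (hQanti n)
    have hstep : Q n ≤ Q (n + 1) ⊔ (maximalIdeal C) • Q n := by
      intro y hy
      have hy' : y ∈ Q (n + 1) ⊔ Ideal.span {x} := by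
        have : y ∈ Q n ⊔ J := Submodule.mem_sup_left hy
        rw [key, hJ, ← sup_assoc] at this
        exact (sup_le_sup_right (sup_le le_rfl (hq₁Q (n+1))) _ : Q (n+1) ⊔ q₁ ⊔ _ ≤ _) this
      obtain ⟨z, hz, w, hw, rfl⟩ := Submodule.mem_sup.mp hy'
      obtain ⟨c, rfl⟩ := Ideal.mem_span_singleton'.mp hw
      have hcx : c * x ∈ Q n := by
        have : z + c * x - z ∈ Q n := Ideal.sub_mem _ hy (hQanti n hz)
        simpa using this
      have hc : c ∈ Q n := by
        have hmem : g c * g x ∈ Ideal.map g (q₁ ⊔ P ^ n) := by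
          have := Ideal.mem_comap.mp hcx
          rwa [map_mul] at this
        have hu : IsUnit (g x) := IsLocalization.map_units D (⟨x, hxP⟩ : P.primeCompl)
        obtain ⟨u, hu⟩ := hu
        have := Ideal.mul_mem_right (↑u⁻¹) _ hmem
        rw [mul_assoc, ← hu, Units.mul_inv, mul_one] at this
        exact Ideal.mem_comap.mpr this
      refine Submodule.mem_sup.mpr ⟨z, hz, c * x, ?_, rfl⟩
      rw [mul_comm]
      exact Submodule.smul_mem_smul hxm hc
    have hjac : maximalIdeal C ≤ Ideal.jacobson ⊥ :=
      (IsLocalRing.jacobson_eq_maximalIdeal ⊥ bot_ne_top).ge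
    exact Submodule.le_of_le_smul_of_le_jacobson_bot (IsNoetherian.noetherian _) hjac hstep
  -- push to D
  have hmapeq : Ideal.map g q₁ ⊔ (Ideal.map g P) ^ n = Ideal.map g q₁ ⊔ (Ideal.map g P) ^ (n + 1) := by
    have := congrArg (Ideal.map g) hQeq
    rw [IsLocalization.map_comap P.primeCompl D, IsLocalization.map_comap P.primeCompl D] at this
    rwa [Ideal.map_sup, Ideal.map_pow, Ideal.map_sup, Ideal.map_pow] at this
  haveI : IsNoetherianRing D := IsLocalization.isNoetherianRing P.primeCompl D ‹_›
  have hmD : Ideal.map g P = maximalIdeal D := Localization.AtPrime.map_eq_maximalIdeal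
  have hpow : (Ideal.map g P) ^ n ≤ Ideal.map g q₁ := by
    have hstep : (Ideal.map g P) ^ n ≤ Ideal.map g q₁ ⊔ (maximalIdeal D) • ((Ideal.map g P) ^ n) := by
      calc (Ideal.map g P) ^ n ≤ Ideal.map g q₁ ⊔ (Ideal.map g P) ^ n := le_sup_right
        _ = Ideal.map g q₁ ⊔ (Ideal.map g P) ^ (n+1) := hmapeq
        _ ≤ _ := by
            refine sup_le_sup_left ?_ _
            rw [pow_succ, ← hmD]
            rw [Ideal.smul_eq_mul, mul_comm]
    have hjac : maximalIdeal D ≤ Ideal.jacobson ⊥ :=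
      (IsLocalRing.jacobson_eq_maximalIdeal ⊥ bot_ne_top).ge
    exact Submodule.le_of_le_smul_of_le_jacobson_bot (IsNoetherian.noetherian _) hjac hstep
  -- conclude
  intro t ht
  have hdisj : Disjoint (P.primeCompl : Set C) (q₁ : Set C) := by
    rw [Set.disjoint_iff]
    rintro y ⟨hy1, hy2⟩
    exact hy1 (hq₁P hy2)
  have htn : t ^ n ∈ q₁ := by
    have h1 : g t ∈ Ideal.map g P := Ideal.mem_map_of_mem g ht
    have h2 : (g t) ^ n ∈ (Ideal.map g P) ^ n := Ideal.pow_mem_pow h1 n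
    have h3 : g (t ^ n) ∈ Ideal.map g q₁ := by
      rw [map_pow]; exact hpow h2
    have h4 : t ^ n ∈ Ideal.comap g (Ideal.map g q₁) := Ideal.mem_comap.mpr h3
    rwa [show Ideal.comap g (Ideal.map g q₁) = q₁ from
      IsLocalization.comap_map_of_isPrime_disjoint P.primeCompl D hq₁ hdisj] at h4
  exact hq₁.mem_of_pow_mem n htn

end PIT

section PITglobal
open IsLocalRing

variable {A : Type*} [CommRing A] [IsNoetherianRing A]

lemma PITrel (q s r : Ideal A) (hq : q.IsPrime) (hs : s.IsPrime) (x : A)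
    (hr : r ∈ (q ⊔ Ideal.span {x}).minimalPrimes) (hqs : q < s) (hsr : s < r) : False := by
  haveI hrP : r.IsPrime := hr.1.1
  set C := Localization.AtPrime r with hC
  set f : A →+* C := algebraMap A C with hf
  haveI : IsNoetherianRing C := IsLocalization.isNoetherianRing r.primeCompl C ‹_›
  have hdisj : ∀ p : Ideal A, p ≤ r → Disjoint (r.primeCompl : Set A) (p : Set A) := by
    intro p hp
    rw [Set.disjoint_iff]
    rintro y ⟨hy1, hy2⟩
    exact hy1 (hp hy2)
  have hqr : q ≤ r := (hqs.trans hsr).le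
  have hsr' : s ≤ r := hsr.le
  haveI hq₁ : (Ideal.map f q).IsPrime :=
    IsLocalization.isPrime_of_isPrime_disjoint r.primeCompl C q hq (hdisj q hqr)
  haveI hP' : (Ideal.map f s).IsPrime :=
    IsLocalization.isPrime_of_isPrime_disjoint r.primeCompl C s hs (hdisj s hsr')
  have hcomapq : Ideal.comap f (Ideal.map f q) = q :=
    IsLocalization.comap_map_of_isPrime_disjoint r.primeCompl C hq (hdisj q hqr)
  have hcomaps : Ideal.comap f (Ideal.map f s) = s :=
    IsLocalization.comap_map_of_isPrime_disjoint r.primeCompl C hs (hdisj s hsr')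
  have hxr : x ∈ r := hr.1.2 (Submodule.mem_sup_right (Ideal.mem_span_singleton_self x))
  have hmC : Ideal.map f r = maximalIdeal C := Localization.AtPrime.map_eq_maximalIdeal
  have hxm : f x ∈ maximalIdeal C := by
    rw [← hmC]; exact Ideal.mem_map_of_mem f hxr
  have huniq : ∀ p : Ideal C, p.IsPrime → Ideal.map f q ≤ p → f x ∈ p → p = maximalIdeal C := by
    intro p hp hle hxp
    have hd := (IsLocalization.isPrime_iff_isPrime_disjoint r.primeCompl C p).mp hp
    have hp₀r : Ideal.comap f p ≤ r := by
      intro y hy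
      by_contra hyr
      exact Set.disjoint_iff.mp hd.2 ⟨hyr, hy⟩
    have hqp₀ : q ≤ Ideal.comap f p := by
      rw [← hcomapq]; exact Ideal.comap_mono hle
    have hxp₀ : x ∈ Ideal.comap f p := Ideal.mem_comap.mpr hxp
    have hle' : q ⊔ Ideal.span {x} ≤ Ideal.comap f p := by
      refine sup_le hqp₀ ?_
      rw [Ideal.span_le, Set.singleton_subset_iff]
      exact hxp₀
    have : r ≤ Ideal.comap f p := hr.2 ⟨hd.1, hle'⟩ hp₀r
    have hcomap_eq : Ideal.comap f p = r := le_antisymm hp₀r this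
    have := congrArg (Ideal.map f) hcomap_eq
    rwa [IsLocalization.map_comap r.primeCompl C, hmC] at this
  have hPm : Ideal.map f s ≠ maximalIdeal C := by
    intro h
    have : Ideal.comap f (Ideal.map f s) = Ideal.comap f (Ideal.map f r) := by rw [h, hmC]
    rw [hcomaps, show Ideal.comap f (Ideal.map f r) = r from
      IsLocalization.comap_map_of_isPrime_disjoint r.primeCompl C hrP
      (hdisj r le_rfl)] at this
    exact hsr.ne this
  have hq₁P : Ideal.map f q ≤ Ideal.map f s := Ideal.map_mono hqs.le
  have hfin := PITlocal (Ideal.map f q) (Ideal.map f s) hq₁ hP' (f x) hxm huniq hPm hq₁P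
  have : s ≤ q := by
    rw [← hcomaps, ← hcomapq]
    exact Ideal.comap_mono hfin
  exact absurd (hqs.trans_le this) (lt_irrefl q)

lemma mainCov (q : Ideal A) (hq : q.IsPrime) (a : A) (ha : a ∉ q)
    (hmax : ∀ p : Ideal A, p.IsPrime → q < p → a ∈ p)
    (p₁ p₂ : Ideal A) (h1 : p₁.IsPrime) (h2 : p₂.IsPrime)
    (hqp₁ : q < p₁) (hp₁p₂ : p₁ < p₂) : False := by
  classical
  set I : Ideal A := q ⊔ Ideal.span {a} with hI
  have hSfin : I.minimalPrimes.Finite := by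
    rw [Ideal.minimalPrimes_eq_comap]
    exact ((minimalPrimes.finite_of_isNoetherianRing (A ⧸ I)).image _)
  have hqp₂ : q < p₂ := hqp₁.trans hp₁p₂
  have hap₁ : a ∈ p₁ := hmax p₁ h1 hqp₁
  have hIp₁ : I ≤ p₁ := sup_le hqp₁.le (by rw [Ideal.span_le, Set.singleton_subset_iff]; exact hap₁)
  -- prime avoidance
  set s : Finset (Ideal A) := insert q hSfin.toFinset with hsdef
  have hprime : ∀ i ∈ s, i ≠ q → i ≠ q → Ideal.IsPrime i := by
    intro i hi _ _
    rw [hsdef, Finset.mem_insert] at hi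
    rcases hi with rfl | hi
    · exact hq
    · rw [Set.Finite.mem_toFinset] at hi
      exact hi.1.1
  have hnotsub : ¬ ((p₂ : Set A) ⊆ ⋃ i ∈ (↑s : Set (Ideal A)), (i : Set A)) := by
    rw [Ideal.subset_union_prime q q hprime]
    rintro ⟨i, hi, hle⟩
    rw [hsdef, Finset.mem_insert] at hi
    rcases hi with rfl | hi
    · exact absurd (hqp₂.trans_le hle) (lt_irrefl _)
    · rw [Set.Finite.mem_toFinset] at hi
      have h1' : i ≤ p₁ := hi.2 ⟨h1, hIp₁⟩ (hp₁p₂.le.trans hle)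
      exact absurd ((h1'.trans_lt hp₁p₂).trans_le hle) (lt_irrefl i)
  obtain ⟨x, hx₂, hxU⟩ := Set.not_subset.mp hnotsub
  have hxq : x ∉ q := by
    intro h
    exact hxU (Set.mem_biUnion (by simp [hsdef]) h)
  have hxS : ∀ i ∈ I.minimalPrimes, x ∉ i := by
    intro i hi h
    exact hxU (Set.mem_biUnion (by simp [hsdef, Set.Finite.mem_toFinset, hi]) h)
  -- minimal prime over q ⊔ (x) inside p₂
  have hle : q ⊔ Ideal.span {x} ≤ p₂ := sup_le hqp₂.le
    (by rw [Ideal.span_le, Set.singleton_subset_iff]; exact hx₂)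
  haveI := h2
  obtain ⟨r, hrmem, hrle⟩ := Ideal.exists_minimalPrimes_le (J := p₂) hle
  have hxr : x ∈ r := hrmem.1.2 (Submodule.mem_sup_right (Ideal.mem_span_singleton_self x))
  have hqr : q < r := lt_of_le_of_ne (le_sup_left.trans hrmem.1.2) (fun h => hxq (h ▸ hxr))
  have har : a ∈ r := hmax r hrmem.1.1 hqr
  have hIr : I ≤ r := sup_le hqr.le (by rw [Ideal.span_le, Set.singleton_subset_iff]; exact har)
  haveI := hrmem.1.1
  obtain ⟨t, htmem, htr⟩ := Ideal.exists_minimalPrimes_le (J := r) (I := I) hIr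
  have hqt : q < t := by
    refine lt_of_le_of_ne (le_sup_left.trans htmem.1.2) (fun h => ha ?_)
    have : a ∈ t := htmem.1.2 (Submodule.mem_sup_right (Ideal.mem_span_singleton_self a))
    rwa [← h] at this
  have htr' : t < r := lt_of_le_of_ne htr (fun h => hxS t htmem (h ▸ hxr))
  exact PITrel q t r hq htmem.1.1 x hrmem hqt htr'

end PITglobal

section OrderLemmas

variable {α : Type*} [PartialOrder α]

/-- insert an element strictly between two consecutive entries of an LTSeries,
keeping endpoints. -/
lemma exists_longer_series (c : LTSeries α) (i : Fin c.length) (z : α)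
    (h1 : c.toFun i.castSucc < z) (h2 : z < c.toFun i.succ) :
    ∃ d : LTSeries α, d.head = c.head ∧ d.last = c.last ∧ d.length = c.length + 1 := by
  have hconn : (c.take i.castSucc).last < z := by
    rw [RelSeries.last_take]; exact h1
  set mid : LTSeries α := (c.take i.castSucc).snoc z hconn with hmid
  have hconn2 : mid.last < (c.drop i.succ).head := by
    rw [RelSeries.head_drop, hmid, RelSeries.last_snoc]; exact h2
  refine ⟨RelSeries.append mid (c.drop i.succ) hconn2, ?_, ?_, ?_⟩
  · rw [RelSeries.head_append, hmid, RelSeries.head_snoc, RelSeries.head_take]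
  · rw [RelSeries.last_append, RelSeries.last_drop]
  · show mid.length + (c.drop i.succ).length + 1 = c.length + 1
    have : mid.length = i.1 + 1 := by
      show (c.take i.castSucc).length + 1 = i.1 + 1
      rw [RelSeries.take_length]
      rfl
    have hd : (c.drop i.succ).length = c.length - (i.1 + 1) := rfl
    have := i.2
    omega

lemma exists_maximal_saturated_chain (n : ℕ)
    (hlen : ∀ c : LTSeries α, c.length ≤ n) {x y : α} (hxy : x ≤ y) :
    ∃ c : LTSeries α, c.head = x ∧ c.last = y ∧
      (∀ c' : LTSeries α, c'.head = x → c'.last = y → c'.length ≤ c.length) ∧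
      ∀ i : Fin c.length, c.toFun i.castSucc ⋖ c.toFun i.succ := by
  set T : Set ℕ := {k | ∃ c : LTSeries α, c.head = x ∧ c.last = y ∧ c.length = k} with hT
  have hne : T.Nonempty := by
    rcases eq_or_lt_of_le hxy with rfl | hlt
    · exact ⟨0, RelSeries.singleton _ x, RelSeries.head_singleton _, RelSeries.last_singleton _, rfl⟩
    · refine ⟨1, (RelSeries.singleton _ x).snoc y ?_, ?_, ?_, rfl⟩
      · rw [RelSeries.last_singleton]; exact hlt
      · rw [RelSeries.head_snoc, RelSeries.head_singleton]
      · rw [RelSeries.last_snoc]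
  have hbdd : BddAbove T := ⟨n, by rintro k ⟨c, -, -, rfl⟩; exact hlen c⟩
  obtain ⟨c, hch, hcl, hclen⟩ := Nat.sSup_mem hne hbdd
  refine ⟨c, hch, hcl, ?_, ?_⟩
  · intro c' h1 h2
    rw [hclen]
    exact le_csSup hbdd ⟨c', h1, h2, rfl⟩
  · intro i
    refine ⟨c.step i, fun z hz1 hz2 => ?_⟩
    obtain ⟨d, hdh, hdl, hdlen⟩ := exists_longer_series c i z hz1 hz2
    have : d.length ≤ sSup T := le_csSup hbdd ⟨d, hdh.trans hch, hdl.trans hcl, rfl⟩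
    omega

lemma snoc_saturated (c : LTSeries α) (z : α) (h : c.last ⋖ z)
    (hsat : ∀ i : Fin c.length, c.toFun i.castSucc ⋖ c.toFun i.succ) :
    ∀ i : Fin (c.snoc z h.lt).length,
      (c.snoc z h.lt).toFun i.castSucc ⋖ (c.snoc z h.lt).toFun i.succ := by
  intro i
  have hi : i.1 < c.length + 1 := i.2
  rcases Nat.lt_or_ge i.1 c.length with hlt | hge
  · set j : Fin c.length := ⟨i.1, hlt⟩ with hj
    have e1 : i = (j.castSucc : Fin (c.length + 1)) := by
      ext; rfl
    rw [e1]
    have e2 : ((j.castSucc : Fin (c.length+1)).castSucc : Fin (c.length + 2))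
        = ((j.castSucc : Fin (c.length + 1)) : Fin (c.length+1)).castSucc := rfl
    have e3 : (j.castSucc : Fin (c.length+1)).succ = (j.succ : Fin (c.length+1)).castSucc :=
      Fin.succ_castSucc j
    convert hsat j using 1
    · exact RelSeries.snoc_castSucc c z h.lt _
    · exact RelSeries.snoc_castSucc c z h.lt j.succ
  · have hieq : i = Fin.last c.length := by
      ext
      simpa using le_antisymm (Nat.lt_succ_iff.mp hi) hge
    rw [hieq]
    have e1 : (Fin.last c.length).succ = Fin.last (c.length + 1) := Fin.succ_last _
    have e2 : (c.snoc z h.lt).toFun (Fin.last (c.length + 1)) = z := by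
      have := RelSeries.last_snoc c z h.lt
      rwa [RelSeries.last] at this
    have e3 : (c.snoc z h.lt).toFun (Fin.last c.length).castSucc = c.last := by
      exact RelSeries.snoc_castSucc c z h.lt _
    convert h using 1
    · exact e3
    · exact e2

lemma exists_ltSeries_of_krullDim_eq_nat {β : Type*} [Preorder β] [Nonempty β] {n : ℕ}
    (h : Order.krullDim β = n) : ∃ p : LTSeries β, p.length = n := by
  by_contra hc
  push_neg at hc
  have hle : ∀ p : LTSeries β, p.length ≤ n := by
    intro p
    have h1 := Order.LTSeries.length_le_krullDim p
    rw [h] at h1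
    exact_mod_cast h1
  obtain ⟨x⟩ := (inferInstance : Nonempty β)
  have hn0 : n ≠ 0 := fun e => hc (RelSeries.singleton _ x) (by rw [e]; rfl)
  have hle' : ∀ p : LTSeries β, (p.length : ℕ∞) ≤ ((n - 1 : ℕ) : ℕ∞) := by
    intro p
    have h1 := hle p
    have h2 := hc p
    exact_mod_cast (by omega : p.length ≤ n - 1)
  have hfin : Order.krullDim β ≤ ((n - 1 : ℕ) : WithBot ℕ∞) := by
    rw [Order.krullDim_eq_iSup_length]
    have e : ((n - 1 : ℕ) : WithBot ℕ∞) = (((n - 1 : ℕ) : ℕ∞) : WithBot ℕ∞) := by norm_cast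
    rw [e]
    exact WithBot.coe_le_coe.mpr (iSup_le hle')
  rw [h] at hfin
  have : (n : ℕ) ≤ n - 1 := by exact_mod_cast hfin
  omega

end OrderLemmas

/-- The height of an ideal: the infimum of the heights of primes containing it. -/
noncomputable def idealHeight {R : Type*} [CommRing R] (I : Ideal R) : ℕ∞ :=
  ⨅ p ∈ {p : PrimeSpectrum R | I ≤ p.asIdeal}, Order.height p

/-- A commutative ring is catenary if any two saturated chains of primes with the same
endpoints have the same length. -/
def IsCatenary (R : Type*) [CommRing R] : Prop :=
  ∀ c₁ c₂ : LTSeries (PrimeSpectrum R),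
    c₁.head = c₂.head → c₁.last = c₂.last →
    (∀ i : Fin c₁.length, c₁.toFun i.castSucc ⋖ c₁.toFun i.succ) →
    (∀ i : Fin c₂.length, c₂.toFun i.castSucc ⋖ c₂.toFun i.succ) →
    c₁.length = c₂.length

/-- If `A` is an equidimensional catenary Noetherian local ring of dimension `n` and
`a` is an element of the maximal ideal avoiding all minimal primes, then every maximal
ideal of `A_a` has height `n - 1`. -/
theorem stmt2 (A : Type*) [CommRing A] [IsNoetherianRing A] [IsLocalRing A]
    (n : ℕ) (hdim : ringKrullDim A = n)
    (hequi : ∀ p ∈ minimalPrimes A, ringKrullDim (A ⧸ p) = ringKrullDim A)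
    (hcat : IsCatenary A)
    (a : A) (ha : a ∈ IsLocalRing.maximalIdeal A)
    (hmin : ∀ p ∈ minimalPrimes A, a ∉ p) :
    ∀ M : Ideal (Localization.Away a), M.IsMaximal →
      idealHeight M = ((n - 1 : ℕ) : ℕ∞) := by
  classical
  intro M hM
  set Aa := Localization.Away a with hAa
  set φ : A →+* Aa := algebraMap A Aa with hφ
  set S := Submonoid.powers a with hS
  haveI hMp : M.IsPrime := hM.isPrime
  set q : Ideal A := Ideal.comap φ M with hqdef
  haveI hq : q.IsPrime := Ideal.IsPrime.comap φ
  have haunit : IsUnit (φ a) := IsLocalization.Away.algebraMap_isUnit a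
  have haq : a ∉ q := by
    intro h
    exact hM.ne_top (Ideal.eq_top_of_isUnit_mem M (Ideal.mem_comap.mp h) haunit)
  have hdisj : ∀ p : Ideal A, p.IsPrime → a ∉ p → Disjoint (S : Set A) (p : Set A) := by
    intro p hp hap
    rw [Set.disjoint_iff]
    rintro y ⟨⟨k, rfl⟩, hy2⟩
    exact hap (hp.mem_of_pow_mem k hy2)
  have hMeq : Ideal.map φ q = M := IsLocalization.map_comap S Aa M
  have hmax : ∀ p : Ideal A, p.IsPrime → q < p → a ∈ p := by
    intro p hp hqp
    by_contra hap
    have hd := hdisj p hp hap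
    haveI hpp : (Ideal.map φ p).IsPrime := IsLocalization.isPrime_of_isPrime_disjoint S Aa p hp hd
    have hle : M ≤ Ideal.map φ p := hMeq ▸ Ideal.map_mono hqp.le
    have hMP : M = Ideal.map φ p := hM.eq_of_le hpp.ne_top hle
    have hcomap : Ideal.comap φ (Ideal.map φ p) = p :=
      IsLocalization.comap_map_of_isPrime_disjoint S Aa hp hd
    have : q = p := by rw [hqdef, hMP, hcomap]
    exact hqp.ne this
  -- points in the prime spectrum
  set qpt : PrimeSpectrum A := ⟨q, hq⟩ with hqpt
  set mpt : PrimeSpectrum A := ⟨IsLocalRing.maximalIdeal A, inferInstance⟩ with hmpt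
  set Mpt : PrimeSpectrum Aa := ⟨M, hMp⟩ with hMpt
  have hqm : qpt < mpt := by
    refine lt_of_le_of_ne ?_ ?_
    · exact IsLocalRing.le_maximalIdeal hq.ne_top
    · intro h
      exact haq (by rw [show q = mpt.asIdeal from congrArg PrimeSpectrum.asIdeal h]; exact ha)
  have hcov : qpt ⋖ mpt := by
    refine ⟨hqm, fun z h1 h2 => ?_⟩
    exact mainCov q hq a haq hmax z.asIdeal (IsLocalRing.maximalIdeal A) z.2
      (IsLocalRing.maximalIdeal.isMaximal A).isPrime h1 h2
  have hlen : ∀ c : LTSeries (PrimeSpectrum A), c.length ≤ n := by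
    intro c
    have h1 := Order.LTSeries.length_le_krullDim c
    rw [show Order.krullDim (PrimeSpectrum A) = ringKrullDim A from rfl, hdim] at h1
    exact_mod_cast h1
  have hn1 : 1 ≤ n := by
    have := hlen ((RelSeries.singleton _ qpt).snoc mpt (by
      rw [RelSeries.last_singleton]; exact hqm))
    simpa using this
  -- minimal prime below q
  obtain ⟨p₀, hp₀mem, hp₀q⟩ := Ideal.exists_minimalPrimes_le (I := (⊥ : Ideal A)) (J := q) bot_le
  have hp₀mem' : p₀ ∈ minimalPrimes A := hp₀mem
  haveI hp₀ : p₀.IsPrime := hp₀mem.1.1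
  set p₀pt : PrimeSpectrum A := ⟨p₀, hp₀⟩ with hp₀pt
  -- a chain of length n from the quotient
  haveI : Nontrivial (A ⧸ p₀) := Ideal.Quotient.nontrivial_iff.mpr hp₀.ne_top
  haveI : Nonempty (PrimeSpectrum (A ⧸ p₀)) := inferInstance
  have hqd : Order.krullDim (PrimeSpectrum (A ⧸ p₀)) = (n : WithBot ℕ∞) := by
    rw [show Order.krullDim (PrimeSpectrum (A ⧸ p₀)) = ringKrullDim (A ⧸ p₀) from rfl,
      hequi p₀ hp₀mem', hdim]
  obtain ⟨d0, hd0len⟩ := exists_ltSeries_of_krullDim_eq_nat hqd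
  have hinj : Function.Injective (PrimeSpectrum.comap (Ideal.Quotient.mk p₀)) :=
    PrimeSpectrum.comap_injective_of_surjective _ Ideal.Quotient.mk_surjective
  have hsm : StrictMono (PrimeSpectrum.comap (Ideal.Quotient.mk p₀)) := by
    refine Monotone.strictMono_of_injective (fun x y h => ?_) hinj
    exact Ideal.comap_mono h
  set d : LTSeries (PrimeSpectrum A) := d0.map _ hsm with hd
  have hdlen : d.length = n := hd0len
  have hdge : ∀ i, p₀pt ≤ d i := by
    intro i
    show p₀ ≤ (PrimeSpectrum.comap (Ideal.Quotient.mk p₀) (d0 i)).asIdeal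
    calc p₀ = RingHom.ker (Ideal.Quotient.mk p₀) := (Ideal.mk_ker).symm
      _ ≤ Ideal.comap (Ideal.Quotient.mk p₀) (d0 i).asIdeal := Ideal.ker_le_comap _
  have hdhead : d.head = p₀pt := by
    rcases eq_or_lt_of_le (hdge 0) with h | h
    · exact h.symm
    · exfalso
      have := hlen (d.cons p₀pt h)
      simp only [RelSeries.cons_length] at this
      have e : (d.cons p₀pt h).length = d.length + 1 := RelSeries.cons_length _ _ _
      omega
  have hdlast : d.last = mpt := by
    have hle : d.last ≤ mpt := IsLocalRing.le_maximalIdeal (d.last).2.ne_top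
    rcases eq_or_lt_of_le hle with h | h
    · exact h
    · exfalso
      have := hlen (d.snoc mpt h)
      simp only [RelSeries.snoc_length] at this
      omega
  -- maximal saturated chains
  obtain ⟨c₁, h1h, h1l, h1max, h1sat⟩ :=
    exists_maximal_saturated_chain n hlen (show p₀pt ≤ qpt from hp₀q)
  obtain ⟨c₂, h2h, h2l, h2max, h2sat⟩ :=
    exists_maximal_saturated_chain n hlen (show p₀pt ≤ mpt from hp₀q.trans hqm.le)
  have hc₂len : c₂.length = n := by
    have h1 := hlen c₂
    have h2 := h2max d hdhead hdlast
    omega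
  have hcov' : c₁.last ⋖ mpt := by rw [h1l]; exact hcov
  have heq := hcat (c₁.snoc mpt hcov'.lt) c₂
    (by rw [RelSeries.head_snoc, h1h, h2h])
    (by rw [RelSeries.last_snoc, h2l])
    (snoc_saturated c₁ mpt hcov' h1sat) h2sat
  have hc₁len : c₁.length = n - 1 := by
    have : c₁.length + 1 = c₂.length := heq
    omega
  -- height of qpt
  have hlow : ((n - 1 : ℕ) : ℕ∞) ≤ Order.height qpt := by
    have h1 := Order.length_le_height_last (p := c₁)
    rw [h1l, hc₁len] at h1
    exact h1
  have hupp : Order.height qpt ≤ ((n - 1 : ℕ) : ℕ∞) := by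
    refine Order.height_le fun p hp => ?_
    have hlt : p.last < mpt := by rw [hp]; exact hqm
    have h1 := hlen (p.snoc mpt hlt)
    have h2 : p.length + 1 ≤ n := by simpa using h1
    exact_mod_cast (by omega : p.length ≤ n - 1)
  have hq_height : Order.height qpt = ((n - 1 : ℕ) : ℕ∞) := le_antisymm hupp hlow
  -- transfer of heights through the localization
  have hMq : Order.height Mpt = Order.height qpt := by
    apply le_antisymm
    · have hf : StrictMono (fun P : PrimeSpectrum Aa =>
          (⟨Ideal.comap φ P.asIdeal, Ideal.IsPrime.comap φ (hK := P.2)⟩ : PrimeSpectrum A)) := by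
        refine Monotone.strictMono_of_injective (fun x y h => Ideal.comap_mono h) ?_
        intro x y h
        have h1 : Ideal.comap φ x.asIdeal = Ideal.comap φ y.asIdeal :=
          congrArg PrimeSpectrum.asIdeal h
        have h2 := congrArg (Ideal.map φ) h1
        rw [IsLocalization.map_comap S Aa, IsLocalization.map_comap S Aa] at h2
        exact PrimeSpectrum.ext h2
      have := Order.height_le_height_apply_of_strictMono _ hf Mpt
      exact this
    · refine Order.height_le fun p hp => ?_
      have hmem : ∀ i, a ∉ (p i).asIdeal := by
        intro i hai
        have hle : p i ≤ p.last := p.monotone (Fin.le_last i)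
        rw [hp] at hle
        exact haq (hle hai)
      set pm : LTSeries (PrimeSpectrum Aa) := LTSeries.mk p.length
        (fun i => ⟨Ideal.map φ (p i).asIdeal,
          IsLocalization.isPrime_of_isPrime_disjoint S Aa _ (p i).2
            (hdisj _ (p i).2 (hmem i))⟩)
        (by
          intro i j hij
          have h1 : (p i).asIdeal < (p j).asIdeal := p.strictMono hij
          refine lt_of_le_of_ne (Ideal.map_mono h1.le) ?_
          intro h2
          have h3 := congrArg (Ideal.comap φ) (congrArg PrimeSpectrum.asIdeal h2)
          rw [show Ideal.comap φ (Ideal.map φ (p i).asIdeal) = (p i).asIdeal from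
              IsLocalization.comap_map_of_isPrime_disjoint S Aa (p i).2
              (hdisj _ (p i).2 (hmem i)),
            show Ideal.comap φ (Ideal.map φ (p j).asIdeal) = (p j).asIdeal from
              IsLocalization.comap_map_of_isPrime_disjoint S Aa (p j).2
              (hdisj _ (p j).2 (hmem j))] at h3
          exact h1.ne h3) with hpm
      have hpml : pm.last = Mpt := by
        apply PrimeSpectrum.ext
        show Ideal.map φ (p (Fin.last _)).asIdeal = M
        rw [show p (Fin.last _) = p.last from rfl, hp]
        exact hMeq
      have h1 := Order.length_le_height_last (p := pm)
      rw [hpml] at h1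
      exact h1
  -- conclusion
  have hset : {p : PrimeSpectrum Aa | M ≤ p.asIdeal} = {Mpt} := by
    ext p
    simp only [Set.mem_setOf_eq, Set.mem_singleton_iff]
    constructor
    · intro hp
      exact PrimeSpectrum.ext (hM.eq_of_le p.2.ne_top hp).symm
    · rintro rfl
      exact le_rfl
  rw [idealHeight, hset, iInf_singleton, hMq, hq_height]
end

section
/- Let R be a Noetherian ring and I a proper ideal of R. Then I has height at least h if and only if there exists a sequence of elements x_1, ..., x_h in I such that for each i with 0 ≤ i ≤ h-1, the element x_{i+1} is not contained in any minimal prime of the ideal (x_1, ..., x_i)R. -/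
open Ideal


section ArtinianAux

variable {S : Type*} [CommRing S]

/-- A Noetherian module killed by a maximal ideal is Artinian. -/
lemma isArtinian_of_torsionBy_maximal {M : Type*} [AddCommGroup M] [Module S M]
    (n : Ideal S) [n.IsMaximal] [IsNoetherian S M]
    (htor : ∀ s ∈ n, ∀ m : M, s • m = 0) : IsArtinian S M := by
  have hT : Module.IsTorsionBySet S M n := fun x s => htor s.1 s.2 x
  letI := hT.module
  haveI := hT.isScalarTower (S := S)
  haveI : IsNoetherian (S ⧸ n) M := isNoetherian_of_tower S inferInstance
  letI : Field (S ⧸ n) := Ideal.Quotient.field n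
  haveI : Module.Finite (S ⧸ n) M := ⟨IsNoetherian.noetherian ⊤⟩
  haveI hA : IsArtinian (S ⧸ n) M := inferInstance
  -- transfer well-foundedness back along the surjection `S → S ⧸ n`
  let g : Submodule S M → Submodule (S ⧸ n) M := fun N =>
    { carrier := N
      add_mem' := fun ha hb => N.add_mem ha hb
      zero_mem' := N.zero_mem
      smul_mem' := by
        rintro c x hx
        obtain ⟨s, rfl⟩ := Ideal.Quotient.mk_surjective c
        rw [hT.mk_smul]
        exact N.smul_mem s hx }
  have hg : ∀ {N N' : Submodule S M}, N < N' → g N < g N' := by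
    intro N N' h
    exact SetLike.lt_iff_le_and_exists.mpr
      ⟨fun x hx => le_of_lt h hx, by
        obtain ⟨x, hx, hx'⟩ := SetLike.exists_of_lt h; exact ⟨x, hx, hx'⟩⟩
  rw [isArtinian_iff]
  exact Subrelation.wf (fun {N N'} h => hg h) (InvImage.wf g ((isArtinian_iff _ _).mp hA))

lemma isArtinian_of_pow_torsion {M : Type*} [AddCommGroup M] [Module S M]
    (n : Ideal S) [n.IsMaximal] (k : ℕ) [IsNoetherian S M]
    (htor : ∀ s ∈ n ^ k, ∀ m : M, s • m = 0) : IsArtinian S M := by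
  induction k generalizing M with
  | zero =>
    have hsub : Subsingleton M := by
      refine ⟨fun a b => ?_⟩
      have := htor 1 (by simp) (a - b)
      rw [one_smul, sub_eq_zero] at this
      exact this
    exact isArtinian_of_finite
  | succ k ih =>
    set N : Submodule S M := n • ⊤ with hN
    haveI : IsArtinian S N := by
      refine ih (M := N) ?_
      intro s hs m
      have hm := m.2
      ext
      rw [Submodule.coe_smul_of_tower, ZeroMemClass.coe_zero]
      refine Submodule.smul_induction_on (p := fun x => s • x = 0) hm ?_ ?_
      · intro r hr x _
        rw [← mul_smul]
        exact htor (s * r) (by rw [pow_succ]; exact Ideal.mul_mem_mul hs hr) x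
      · intro x y hx hy
        rw [smul_add, hx, hy, add_zero]
    haveI : IsArtinian S (M ⧸ N) := by
      refine isArtinian_of_torsionBy_maximal n ?_
      intro s hs m
      obtain ⟨m, rfl⟩ := Submodule.Quotient.mk_surjective N m
      rw [← Submodule.Quotient.mk_smul, Submodule.Quotient.mk_eq_zero]
      exact Submodule.smul_mem_smul hs trivial
    exact ((isArtinian_iff_submodule_quotient N).mpr ⟨inferInstance, inferInstance⟩)

/-- A Noetherian ring with a nilpotent maximal ideal is Artinian. -/
lemma isArtinianRing_of_pow_maximal_eq_bot [IsNoetherianRing S]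
    (n : Ideal S) [n.IsMaximal] (k : ℕ) (h : n ^ k = ⊥) : IsArtinianRing S := by
  refine isArtinian_of_pow_torsion n k ?_
  intro s hs m
  rw [h] at hs
  rw [Submodule.mem_bot] at hs
  rw [hs, zero_smul]

end ArtinianAux

open IsLocalRing

section PITlocal
open IsLocalRing
variable {A : Type*} [CommRing A] [IsNoetherianRing A] [IsLocalRing A]

/-- Krull's principal ideal theorem, local form: if the maximal ideal of a Noetherian local
ring is minimal over a principal ideal, then every prime strictly below it is minimal. -/
lemma pit_local (a : A) (hmin : maximalIdeal A ∈ (Ideal.span {a}).minimalPrimes)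
    {q r : Ideal A} [hq : q.IsPrime] [hr : r.IsPrime]
    (hqm : q < maximalIdeal A) (hrq : r ≤ q) : q ≤ r := by
  have haq : a ∉ q := fun h => absurd
    (lt_of_lt_of_le hqm (hmin.2 ⟨hq, span_le.mpr (by simpa using h)⟩ hqm.le)) (lt_irrefl _)
  set T := A ⧸ (span {a} : Ideal A) with hT
  let π : A →+* T := Ideal.Quotient.mk _
  have hπ : Function.Surjective π := Ideal.Quotient.mk_surjective
  have hker : RingHom.ker π = span {a} := Ideal.mk_ker
  -- every prime of `A` containing `(a)` is the maximal ideal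
  have hup : ∀ (P : Ideal A), P.IsPrime → span {a} ≤ P → P = maximalIdeal A := fun P hP hle =>
    le_antisymm (le_maximalIdeal hP.ne_top) (hmin.2 ⟨hP, hle⟩ (le_maximalIdeal hP.ne_top))
  -- hence T is artinian
  haveI hmm : (map π (maximalIdeal A)).IsMaximal := by
    rcases Ideal.map_eq_top_or_isMaximal_of_surjective π hπ
      (IsLocalRing.maximalIdeal.isMaximal A) with h | h
    · exfalso
      have := congrArg (comap π) h
      rw [comap_map_of_surjective π hπ, ← RingHom.ker_eq_comap_bot, hker, comap_top,
        sup_eq_left.mpr hmin.1.2] at this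
      exact (IsLocalRing.maximalIdeal.isMaximal A).ne_top this
    · exact h
  haveI : IsArtinianRing T := by
    have hle : map π (maximalIdeal A) ≤ nilradical T := by
      rw [nilradical_eq_sInf]
      refine le_sInf ?_
      intro P' hP'
      rw [Set.mem_setOf_eq] at hP'
      haveI := hP'
      have h1 : (comap π P').IsPrime := Ideal.IsPrime.comap π
      have h2 : span {a} ≤ comap π P' := by
        have := Ideal.ker_le_comap (K := P') π
        rwa [hker] at this
      have h3 := hup _ h1 h2
      have h4 : map π (comap π P') = P' := map_comap_of_surjective π hπ P'
      rw [← h4, h3]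
    obtain ⟨k, hk⟩ := IsNoetherianRing.isNilpotent_nilradical T
    refine isArtinianRing_of_pow_maximal_eq_bot (map π (maximalIdeal A)) k (le_bot_iff.mp ?_)
    calc (map π (maximalIdeal A)) ^ k ≤ (nilradical T) ^ k := pow_le_pow_left' hle k
      _ = ⊥ := by rw [hk, Ideal.zero_eq_bot]
  -- symbolic powers
  set Rq := Localization.AtPrime q with hRq
  let f := algebraMap A Rq
  set Q : Ideal Rq := map f q with hQdef
  set s : ℕ → Ideal A := fun n => comap f (Q ^ n) with hs
  have santi : ∀ n, s (n + 1) ≤ s n :=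
    fun n => Ideal.comap_mono (Ideal.pow_le_pow_right (Nat.le_succ n))
  -- stabilization of the chain in T
  obtain ⟨n₀, hn₀⟩ := IsArtinian.monotone_stabilizes (R := T) (M := T)
    ⟨fun n => OrderDual.toDual (map π (s n)), by
      intro i j hij
      exact Ideal.map_mono (by
        induction hij with
        | refl => exact le_refl _
        | step _ ih => exact le_trans (santi _) ih)⟩
  have hstab : map π (s n₀) = map π (s (n₀ + 1)) := hn₀ (n₀ + 1) (Nat.le_succ n₀)
  -- s n₀ ≤ s (n₀+1) ⊔ m • s n₀
  have hkey : s n₀ ≤ s (n₀ + 1) ⊔ (maximalIdeal A) • s n₀ := by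
    intro y hy
    have : y ∈ comap π (map π (s (n₀ + 1))) := by
      rw [← hstab]; exact Ideal.le_comap_map hy
    rw [comap_map_of_surjective π hπ, ← RingHom.ker_eq_comap_bot, hker] at this
    obtain ⟨z, hz, w, hw, hzw⟩ := Submodule.mem_sup.mp this
    obtain ⟨c, hc⟩ := Ideal.mem_span_singleton'.mp hw
    -- c * a ∈ s n₀
    have hca : c * a ∈ s n₀ := by
      have : w = y - z := by rw [← hzw]; ring
      rw [hc, this]
      exact (s n₀).sub_mem hy (santi n₀ hz)
    -- a is invertible in Rq, so c ∈ s n₀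
    have hu : IsUnit (f a) := IsLocalization.map_units Rq (⟨a, haq⟩ : q.primeCompl)
    have hcs : c ∈ s n₀ := by
      have h1 : f c * f a ∈ Q ^ n₀ := by
        rw [← _root_.map_mul]; exact hca
      have h2 : f c * f a * ↑hu.unit⁻¹ ∈ Q ^ n₀ := Ideal.mul_mem_right _ _ h1
      rwa [mul_assoc, IsUnit.mul_val_inv, mul_one] at h2
    have ham : a ∈ maximalIdeal A := hmin.1.2 (Ideal.mem_span_singleton_self a)
    refine Submodule.mem_sup.mpr ⟨z, hz, c * a, ?_, by rw [hc]; exact hzw⟩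
    rw [mul_comm, Ideal.smul_eq_mul]
    exact Ideal.mul_mem_mul ham hcs
  -- Nakayama in A
  have hseq : s n₀ = s (n₀ + 1) := by
    have hjac : maximalIdeal A ≤ ((⊥ : Ideal A)).jacobson := by
      rw [IsLocalRing.jacobson_eq_maximalIdeal ⊥ bot_ne_top]
    have := Submodule.sup_eq_sup_smul_of_le_smul_of_le_jacobson
      (IsNoetherian.noetherian (s n₀)) hjac hkey
    rw [Submodule.bot_smul, sup_bot_eq, sup_eq_right.mpr (santi n₀)] at this
    exact le_antisymm this.le (santi n₀)
  -- push forward : Q ^ n₀ = Q ^ (n₀ + 1)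
  have hQ : Q ^ n₀ = Q ^ (n₀ + 1) := by
    have h1 := IsLocalization.map_comap q.primeCompl Rq (Q ^ n₀)
    have h2 := IsLocalization.map_comap q.primeCompl Rq (Q ^ (n₀ + 1))
    rw [← h1, ← h2]
    show map f (s n₀) = map f (s (n₀ + 1))
    rw [hseq]
  -- Nakayama in Rq
  haveI : IsNoetherianRing Rq := IsLocalization.isNoetherianRing q.primeCompl Rq inferInstance
  have hQbot : Q ^ n₀ = ⊥ := by
    refine Submodule.eq_bot_of_le_smul_of_le_jacobson_bot Q (Q ^ n₀)
      (IsNoetherian.noetherian _) ?_ ?_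
    · rw [Ideal.smul_eq_mul, mul_comm, ← pow_succ, ← hQ]
    · rw [IsLocalRing.jacobson_eq_maximalIdeal ⊥ bot_ne_top]
      rw [hQdef, Localization.AtPrime.map_eq_maximalIdeal]
  -- conclude
  intro x hx
  have h1 : f x ∈ Q := Ideal.mem_map_of_mem f hx
  have h2 : f (x ^ n₀) = 0 := by
    rw [map_pow]
    rw [← Submodule.mem_bot (R := Rq), ← hQbot]
    exact Ideal.pow_mem_pow h1 n₀
  obtain ⟨c, hc⟩ := (IsLocalization.map_eq_zero_iff q.primeCompl Rq (x ^ n₀)).mp h2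
  have hcr : (c : A) ∉ r := fun h => c.2 (hrq h)
  have : (c : A) * x ^ n₀ ∈ r := by rw [hc]; exact r.zero_mem
  rcases hr.mem_or_mem this with h | h
  · exact absurd h hcr
  · exact hr.mem_of_pow_mem n₀ h
end PITlocal

/-- Krull's principal ideal theorem, relative form. -/
lemma pit_global {R : Type*} [CommRing R] [IsNoetherianRing R] (J : Ideal R) (a : R)
    {p q r : Ideal R} [hpp : p.IsPrime] [hqq : q.IsPrime] [hrr : r.IsPrime]
    (hp : p ∈ (J ⊔ Ideal.span {a}).minimalPrimes)
    (hqp : q < p) (hrq : r ≤ q) (hJr : J ≤ r) : q ≤ r := by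
  have hJq : J ≤ q := le_trans hJr hrq
  have hJp : J ≤ p := le_trans hJq hqp.le
  set B := R ⧸ J with hB
  let π : R →+* B := Ideal.Quotient.mk J
  have hπ : Function.Surjective π := Ideal.Quotient.mk_surjective
  have hker : RingHom.ker π = J := Ideal.mk_ker
  haveI : IsNoetherianRing B := Ideal.Quotient.isNoetherianRing J
  set p₁ := map π p with hp₁
  set q₁ := map π q with hq₁
  set r₁ := map π r with hr₁
  haveI hp₁p : p₁.IsPrime := map_isPrime_of_surjective hπ (hker.le.trans hJp)
  haveI hq₁p : q₁.IsPrime := map_isPrime_of_surjective hπ (hker.le.trans hJq)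
  haveI hr₁p : r₁.IsPrime := map_isPrime_of_surjective hπ (hker.le.trans hJr)
  have cback : ∀ t : Ideal R, J ≤ t → comap π (map π t) = t := by
    intro t ht
    rw [comap_map_of_surjective π hπ, ← RingHom.ker_eq_comap_bot, hker, sup_eq_left.mpr ht]
  -- p₁ is minimal over the image of (a)
  have hp₁min : p₁ ∈ (Ideal.span {π a}).minimalPrimes := by
    refine ⟨⟨hp₁p, ?_⟩, ?_⟩
    · rw [span_le, Set.singleton_subset_iff]
      exact mem_map_of_mem π (hp.1.2 (le_sup_right (a := J) (Ideal.mem_span_singleton_self a)))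
    · rintro P ⟨hPp, hPa⟩ hPle
      haveI := hPp
      have h1 : (comap π P).IsPrime := Ideal.IsPrime.comap π
      have h2 : J ⊔ Ideal.span {a} ≤ comap π P := by
        refine sup_le ?_ ?_
        · have := Ideal.ker_le_comap (K := P) π; rwa [hker] at this
        · rw [span_le, Set.singleton_subset_iff]
          exact Ideal.mem_comap.mpr (hPa (Ideal.mem_span_singleton_self _))
      have h3 : comap π P ≤ p := by
        have := Ideal.comap_mono (f := π) hPle
        rwa [cback p hJp] at this
      have h4 := hp.2 ⟨h1, h2⟩ h3
      calc p₁ ≤ map π (comap π P) := Ideal.map_mono h4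
        _ = P := map_comap_of_surjective π hπ P
  -- localize B at p₁
  set A := Localization.AtPrime p₁ with hA
  let g := algebraMap B A
  haveI : IsNoetherianRing A := IsLocalization.isNoetherianRing p₁.primeCompl A inferInstance
  have hmapp : map g p₁ = maximalIdeal A := Localization.AtPrime.map_eq_maximalIdeal
  have hcomm : comap g (maximalIdeal A) = p₁ := IsLocalization.AtPrime.comap_maximalIdeal A p₁
  have hq₁le : q₁ ≤ p₁ := Ideal.map_mono hqp.le
  have hr₁le : r₁ ≤ q₁ := Ideal.map_mono hrq
  have hdisj : ∀ t₁ : Ideal B, t₁ ≤ p₁ → Disjoint (p₁.primeCompl : Set B) (t₁ : Set B) :=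
    fun t₁ h => Set.disjoint_left.mpr (fun x hx hxt => hx (h hxt))
  haveI hq₂p : (map g q₁).IsPrime :=
    IsLocalization.isPrime_of_isPrime_disjoint p₁.primeCompl A q₁ hq₁p (hdisj q₁ hq₁le)
  haveI hr₂p : (map g r₁).IsPrime :=
    IsLocalization.isPrime_of_isPrime_disjoint p₁.primeCompl A r₁ hr₁p (hdisj r₁ (hr₁le.trans hq₁le))
  have hcq₂ : comap g (map g q₁) = q₁ :=
    IsLocalization.comap_map_of_isPrime_disjoint p₁.primeCompl A hq₁p (hdisj q₁ hq₁le)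
  have hcr₂ : comap g (map g r₁) = r₁ :=
    IsLocalization.comap_map_of_isPrime_disjoint p₁.primeCompl A hr₁p (hdisj r₁ (hr₁le.trans hq₁le))
  -- the maximal ideal of A is minimal over (g (π a))
  have hmmin : maximalIdeal A ∈ (Ideal.span {g (π a)}).minimalPrimes := by
    refine ⟨⟨(maximalIdeal.isMaximal A).isPrime, ?_⟩, ?_⟩
    · rw [span_le, Set.singleton_subset_iff, ← hmapp]
      exact mem_map_of_mem g (hp₁min.1.2 (Ideal.mem_span_singleton_self _))
    · rintro P ⟨hPp, hPa⟩ hPle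
      haveI := hPp
      have h1 : (comap g P).IsPrime := Ideal.IsPrime.comap g
      have h2 : Ideal.span {π a} ≤ comap g P := by
        rw [span_le, Set.singleton_subset_iff]
        exact Ideal.mem_comap.mpr (hPa (Ideal.mem_span_singleton_self _))
      have h3 : comap g P ≤ p₁ := by
        have := Ideal.comap_mono (f := g) hPle
        rwa [hcomm] at this
      have h4 := hp₁min.2 ⟨h1, h2⟩ h3
      calc maximalIdeal A = map g p₁ := hmapp.symm
        _ ≤ map g (comap g P) := Ideal.map_mono h4
        _ = P := IsLocalization.map_comap p₁.primeCompl A P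
  -- apply the local PIT
  have hq₂m : map g q₁ < maximalIdeal A := by
    refine lt_of_le_of_ne (hmapp ▸ Ideal.map_mono hq₁le) ?_
    intro h
    have : q₁ = p₁ := by rw [← hcq₂, h, hcomm]
    have : q = p := by
      have h5 := congrArg (comap π) this
      rwa [hq₁, hp₁, cback q hJq, cback p hJp] at h5
    exact hqp.ne this
  have hmain : map g q₁ ≤ map g r₁ :=
    pit_local (g (π a)) hmmin hq₂m (Ideal.map_mono hr₁le)
  -- pull back
  intro x hx
  have h1 : g (π x) ∈ map g r₁ := hmain (mem_map_of_mem g (mem_map_of_mem π hx))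
  have h2 : π x ∈ r₁ := by rw [← hcr₂]; exact h1
  have h3 : x ∈ comap π r₁ := h2
  rwa [hr₁, cback r hJr] at h3

/-- Krull's height theorem: a prime minimal over an ideal generated by `n` elements
has height at most `n`. -/
theorem krull_height_le {R : Type*} [CommRing R] [IsNoetherianRing R] :
    ∀ (n : ℕ) (x : Fin n → R) (p : PrimeSpectrum R),
      p.asIdeal ∈ (Ideal.span (Set.range x)).minimalPrimes → Order.height p ≤ n := by
  intro n
  induction n with
  | zero =>
    intro x p hp
    rw [Set.range_eq_empty x, Ideal.span_empty] at hp
    have h0 : Order.height p = 0 := Order.height_eq_zero.mpr <| by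
      intro q hq
      exact (PrimeSpectrum.asIdeal_le_asIdeal _ _).mp
        (hp.2 ⟨q.2, bot_le⟩ ((PrimeSpectrum.asIdeal_le_asIdeal _ _).mpr hq))
    rw [h0]; exact le_refl _
  | succ n ih =>
    intro x p hp
    refine Order.height_le ?_
    intro c hlast
    by_cases hc0 : c.length = 0
    · rw [hc0]; exact_mod_cast Nat.zero_le _
    have hq0lt : c.eraseLast.last < c.last := RelSeries.eraseLast_last_rel_last c hc0
    set q0 := c.eraseLast.last with hq0
    have hq0p : q0 < p := hlast ▸ hq0lt
    have hq0pi : q0.asIdeal < p.asIdeal := by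
      refine lt_of_le_of_ne ((PrimeSpectrum.asIdeal_le_asIdeal _ _).mpr hq0p.le) ?_
      intro h
      exact hq0p.ne (PrimeSpectrum.ext h)
    -- a maximal prime strictly between q0 and p
    obtain ⟨Q, ⟨hQpr, hq0Q, hQp⟩, hQmax⟩ :=
      (set_has_maximal_iff_noetherian.mpr (inferInstance : IsNoetherian R R))
        {t : Ideal R | t.IsPrime ∧ q0.asIdeal ≤ t ∧ t < p.asIdeal}
        ⟨q0.asIdeal, q0.2, le_refl _, hq0pi⟩
    haveI := hQpr
    -- some xᵢ avoids Q
    have hxi : ∃ i, x i ∉ Q := by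
      by_contra h
      push_neg at h
      have : Ideal.span (Set.range x) ≤ Q := Ideal.span_le.mpr (by rintro _ ⟨i, rfl⟩; exact h i)
      exact hQp.ne (le_antisymm hQp.le (hp.2 ⟨hQpr, this⟩ hQp.le))
    obtain ⟨i, hxiQ⟩ := hxi
    -- p is minimal over Q ⊔ (x i)
    have hpmin2 : p.asIdeal ∈ ((Q ⊔ Ideal.span {x i} : Ideal R)).minimalPrimes := by
      refine ⟨⟨p.2, sup_le hQp.le (Ideal.span_le.mpr (by
        rintro _ rfl
        exact hp.1.2 (Ideal.subset_span ⟨i, rfl⟩)))⟩, ?_⟩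
      rintro P ⟨hPpr, hPle⟩ hPp
      by_contra hcon
      have hPltp : P < p.asIdeal := lt_of_le_of_ne hPp (fun h => hcon (le_of_eq h.symm))
      have hQP : Q < P := by
        refine lt_of_le_of_ne (le_trans le_sup_left hPle) ?_
        rintro rfl
        exact hxiQ (hPle (le_sup_right (a := Q) (Ideal.mem_span_singleton_self _)))
      exact hQmax P ⟨hPpr, le_trans hq0Q hQP.le, hPltp⟩ hQP
    -- localize at p
    set A := Localization.AtPrime p.asIdeal with hA
    let f := algebraMap R A
    set I₀ : Ideal R := (Q ⊔ Ideal.span {x i} : Ideal R) with hI₀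
    have hmapp : Ideal.map f p.asIdeal = IsLocalRing.maximalIdeal A :=
      Localization.AtPrime.map_eq_maximalIdeal
    have hcomm : Ideal.comap f (IsLocalRing.maximalIdeal A) = p.asIdeal :=
      IsLocalization.AtPrime.comap_maximalIdeal A p.asIdeal
    have hrad : (Ideal.map f I₀).radical = IsLocalRing.maximalIdeal A := by
      rw [Ideal.radical_eq_sInf]
      refine le_antisymm (sInf_le ⟨?_, (IsLocalRing.maximalIdeal.isMaximal A).isPrime⟩)
        (le_sInf ?_)
      · calc Ideal.map f I₀ ≤ Ideal.map f p.asIdeal := Ideal.map_mono hpmin2.1.2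
          _ = IsLocalRing.maximalIdeal A := hmapp
      · rintro J ⟨hJle, hJpr⟩
        haveI := hJpr
        have h1 : (Ideal.comap f J).IsPrime := Ideal.IsPrime.comap f
        have h2 : I₀ ≤ Ideal.comap f J := le_trans Ideal.le_comap_map (Ideal.comap_mono hJle)
        have h3 : Ideal.comap f J ≤ p.asIdeal := by
          have := Ideal.comap_mono (f := f) (IsLocalRing.le_maximalIdeal hJpr.ne_top)
          rwa [hcomm] at this
        have h4 := hpmin2.2 ⟨h1, h2⟩ h3
        calc IsLocalRing.maximalIdeal A = Ideal.map f p.asIdeal := hmapp.symm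
          _ ≤ Ideal.map f (Ideal.comap f J) := Ideal.map_mono h4
          _ ≤ J := Ideal.map_comap_le
    -- each x j satisfies an equation  u * x j ^ k = y + cc * x i  with u ∉ p, y ∈ Q
    have hdata : ∀ j : {j : Fin (n + 1) // j ≠ i}, ∃ (k : ℕ) (u y cc : R),
        u ∉ p.asIdeal ∧ y ∈ Q ∧ u * x j.1 ^ k = y + cc * x i := by
      rintro ⟨j, hj⟩
      have h1 : f (x j) ∈ (Ideal.map f I₀).radical := by
        rw [hrad, ← hmapp]
        exact Ideal.mem_map_of_mem f (hp.1.2 (Ideal.subset_span ⟨j, rfl⟩))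
      obtain ⟨k, hk⟩ := h1
      rw [← map_pow] at hk
      obtain ⟨⟨z, u⟩, he⟩ := (IsLocalization.mem_map_algebraMap_iff p.asIdeal.primeCompl A).mp hk
      rw [← _root_.map_mul] at he
      obtain ⟨cm, hcm⟩ := (IsLocalization.eq_iff_exists p.asIdeal.primeCompl A).mp he
      have hmem : (cm : R) * (u : R) * x j ^ k ∈ I₀ := by
        have : (cm : R) * ((z : R)) ∈ I₀ := I₀.mul_mem_left _ z.2
        rw [← hcm] at this
        convert this using 1
        ring
      obtain ⟨y, hy, w, hw, hyw⟩ := Submodule.mem_sup.mp hmem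
      obtain ⟨cc, hcc⟩ := Ideal.mem_span_singleton'.mp hw
      refine ⟨k, (cm : R) * (u : R), y, cc, ?_, hy, ?_⟩
      · exact (cm * u : p.asIdeal.primeCompl).2
      · rw [← hyw, hcc]
    choose k u y cc hu hyQ heq using hdata
    set J' : Ideal R := Ideal.span (Set.range y) with hJ'
    have hJ'Q : J' ≤ Q := Ideal.span_le.mpr (by rintro _ ⟨j, rfl⟩; exact hyQ j)
    -- p is minimal over J' ⊔ (x i)
    have hpmin3 : p.asIdeal ∈ ((J' ⊔ Ideal.span {x i} : Ideal R)).minimalPrimes := by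
      refine ⟨⟨p.2, sup_le (le_trans hJ'Q hQp.le) (Ideal.span_le.mpr (by
        rintro _ rfl
        exact hp.1.2 (Ideal.subset_span ⟨i, rfl⟩)))⟩, ?_⟩
      rintro P ⟨hPpr, hPle⟩ hPp
      haveI := hPpr
      have hrange : Set.range x ⊆ P := by
        rintro _ ⟨j, rfl⟩
        by_cases hj : j = i
        · subst hj
          exact hPle (le_sup_right (a := J') (Ideal.mem_span_singleton_self _))
        · have h5 : u ⟨j, hj⟩ * x j ^ k ⟨j, hj⟩ ∈ P := by
            rw [heq ⟨j, hj⟩]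
            exact P.add_mem (hPle (le_sup_left (b := Ideal.span {x i}) (Ideal.subset_span ⟨⟨j, hj⟩, rfl⟩)))
              (P.mul_mem_left _ (hPle (le_sup_right (a := J') (Ideal.mem_span_singleton_self _))))
          rcases hPpr.mem_or_mem h5 with h6 | h6
          · exact absurd (hPp h6) (hu ⟨j, hj⟩)
          · exact hPpr.mem_of_pow_mem _ h6
      exact hp.2 ⟨hPpr, Ideal.span_le.mpr hrange⟩ hPp
    -- Q is minimal over J' by the principal ideal theorem
    have hQmin : Q ∈ J'.minimalPrimes := by
      refine ⟨⟨hQpr, hJ'Q⟩, ?_⟩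
      rintro P ⟨hPpr, hPle⟩ hPQ
      haveI := hPpr
      exact pit_global J' (x i) hpmin3 hQp hPQ hPle
    -- apply the induction hypothesis
    let e := finSuccAboveEquiv i
    have hrange : Set.range (fun m => y (e m)) = Set.range y := by
      have : (fun m => y (e m)) = y ∘ e := rfl
      rw [this, Set.range_comp, Equiv.range_eq_univ, Set.image_univ]
    set Qpt : PrimeSpectrum R := ⟨Q, hQpr⟩ with hQpt
    have hih : Order.height Qpt ≤ (n : ℕ∞) := ih (fun m => y (e m)) Qpt (by
      show Qpt.asIdeal ∈ (Ideal.span (Set.range (fun m => y (e m)))).minimalPrimes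
      rw [hrange]; exact hQmin)
    have hle : c.eraseLast.last ≤ Qpt := (PrimeSpectrum.asIdeal_le_asIdeal _ _).mp hq0Q
    have h7 : (c.eraseLast.length : ℕ∞) ≤ (n : ℕ∞) :=
      le_trans (Order.length_le_height hle) hih
    have h8 : c.eraseLast.length = c.length - 1 := rfl
    rw [h8] at h7
    have h9 : c.length - 1 ≤ n := by exact_mod_cast h7
    have : c.length ≤ n + 1 := by omega
    exact_mod_cast Nat.cast_le.mpr this

lemma minimalPrimes_finite {R : Type*} [CommRing R] [IsNoetherianRing R] (J : Ideal R) :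
    J.minimalPrimes.Finite := by
  rw [Ideal.minimalPrimes_eq_comap]
  exact (minimalPrimes.finite_of_isNoetherianRing (R ⧸ J)).image _

/-- A proper ideal of a Noetherian ring has height at least `h` iff there is a
sequence `x_1, ..., x_h` in `I` such that `x_{i+1}` avoids all minimal primes of
`(x_1, ..., x_i)`. -/
theorem stmt5 (R : Type*) [CommRing R] [IsNoetherianRing R]
    (I : Ideal R) (hI : I ≠ ⊤) (h : ℕ) :
    (h : ℕ∞) ≤ idealHeight I ↔
      ∃ x : Fin h → R, (∀ i, x i ∈ I) ∧
        ∀ i : Fin h, ∀ P ∈ (Ideal.span (x '' {j | j < i})).minimalPrimes, x i ∉ P := by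
  constructor
  · intro hmain
    have key : ∀ k, k ≤ h → ∃ xk : Fin k → R, (∀ i, xk i ∈ I) ∧
        ∀ i : Fin k, ∀ P ∈ (Ideal.span (xk '' {j | j < i})).minimalPrimes, xk i ∉ P := by
      intro k
      induction k with
      | zero => exact fun _ => ⟨fun i => i.elim0, fun i => i.elim0, fun i => i.elim0⟩
      | succ k ihk =>
        intro hk1
        obtain ⟨xk, hxkI, hxkav⟩ := ihk (Nat.le_of_succ_le hk1)
        set Jk := Ideal.span (Set.range xk) with hJk
        -- pick b ∈ I avoiding every minimal prime of Jk
        have havoid : ∃ b ∈ I, ∀ P ∈ Jk.minimalPrimes, b ∉ P := by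
          by_contra hcon
          push_neg at hcon
          set s := (minimalPrimes_finite Jk).toFinset with hsdef
          have hsub : (I : Set R) ⊆ ⋃ P ∈ (s : Finset (Ideal R)), (P : Set R) := by
            intro b hb
            obtain ⟨P, hP, hbP⟩ := hcon b hb
            exact Set.mem_biUnion (by rw [hsdef]; exact (Set.Finite.mem_toFinset _).mpr hP) hbP
          have hprimes : ∀ P ∈ s, P ≠ (⊥ : Ideal R) → P ≠ (⊥ : Ideal R) →
              (id P : Ideal R).IsPrime := by
            intro P hP _ _
            exact ((Set.Finite.mem_toFinset _).mp hP).1.1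
          obtain ⟨P, hPs, hIP⟩ :=
            (Ideal.subset_union_prime (f := (id : Ideal R → Ideal R)) ⊥ ⊥ hprimes).mp hsub
          have hPmin : P ∈ Jk.minimalPrimes := (Set.Finite.mem_toFinset _).mp hPs
          haveI : P.IsPrime := hPmin.1.1
          set pt : PrimeSpectrum R := ⟨P, hPmin.1.1⟩ with hpt
          have h1 : (h : ℕ∞) ≤ Order.height pt := by
            refine le_trans hmain ?_
            exact iInf₂_le pt hIP
          have h2 : Order.height pt ≤ (k : ℕ∞) := krull_height_le k xk pt hPmin
          have h3 : h ≤ k := Nat.cast_le.mp (le_trans h1 h2)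
          omega
        obtain ⟨b, hbI, hbav⟩ := havoid
        refine ⟨Fin.snoc xk b, ?_, ?_⟩
        · intro i
          refine Fin.lastCases ?_ ?_ i
          · rw [Fin.snoc_last]; exact hbI
          · intro i'; rw [Fin.snoc_castSucc]; exact hxkI i'
        · intro i
          refine Fin.lastCases ?_ ?_ i
          · have himg : Fin.snoc xk b '' {j | j < Fin.last k} = Set.range xk := by
              ext z
              constructor
              · rintro ⟨j, hj, rfl⟩
                have hj' : j ≠ Fin.last k := ne_of_lt hj
                obtain ⟨j', rfl⟩ := Fin.exists_castSucc_eq.mpr hj'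
                exact ⟨j', by simp⟩
              · rintro ⟨j', rfl⟩
                exact ⟨j'.castSucc, Fin.castSucc_lt_last j', by simp⟩
            rw [himg, Fin.snoc_last]
            exact hbav
          · intro i'
            have himg : Fin.snoc xk b '' {j | j < Fin.castSucc i'} =
                xk '' {j | j < i'} := by
              ext z
              constructor
              · rintro ⟨j, hj, rfl⟩
                have hj' : j ≠ Fin.last k := by
                  intro hlast
                  rw [hlast] at hj
                  exact absurd (lt_of_lt_of_le hj (Fin.le_last _)) (lt_irrefl _)
                obtain ⟨j'', rfl⟩ := Fin.exists_castSucc_eq.mpr hj'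
                refine ⟨j'', Fin.castSucc_lt_castSucc_iff.mp hj, by simp⟩
              · rintro ⟨j'', hj'', rfl⟩
                exact ⟨j''.castSucc, Fin.castSucc_lt_castSucc_iff.mpr hj'', by simp⟩
            rw [himg, Fin.snoc_castSucc]
            exact hxkav i'
    obtain ⟨x, h1, h2⟩ := key h le_rfl
    exact ⟨x, h1, h2⟩
  · rintro ⟨x, hxI, hav⟩
    rw [idealHeight]
    refine le_iInf₂ ?_
    intro pt hpt
    rw [Set.mem_setOf_eq] at hpt
    haveI := pt.2
    set Jk : ℕ → Ideal R := fun k => Ideal.span (x '' {j | (j : ℕ) < k}) with hJkdef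
    have hJkmono : ∀ k, Jk k ≤ Jk (k + 1) :=
      fun k => Ideal.span_mono (Set.image_mono (f := x) (fun j hj => Nat.lt_succ_of_lt hj))
    have hJkI : ∀ k, Jk k ≤ I :=
      fun k => Ideal.span_le.mpr (by rintro _ ⟨j, _, rfl⟩; exact hxI j)
    have D : ∀ jj, jj ≤ h → ∃ c : LTSeries (PrimeSpectrum R), c.length = jj ∧
        c.last ≤ pt ∧ c.head.asIdeal ∈ (Jk (h - jj)).minimalPrimes := by
      intro jj
      induction jj with
      | zero =>
        intro _
        obtain ⟨q, hqmin, hqle⟩ :=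
          Ideal.exists_minimalPrimes_le (I := Jk h) (J := pt.asIdeal) (le_trans (hJkI h) hpt)
        haveI : q.IsPrime := hqmin.1.1
        refine ⟨RelSeries.singleton _ ⟨q, hqmin.1.1⟩, rfl, ?_, ?_⟩
        · exact (PrimeSpectrum.asIdeal_le_asIdeal _ _).mp hqle
        · rw [Nat.sub_zero]; exact hqmin
      | succ jj ihjj =>
        intro hjj1
        obtain ⟨c, hclen, hclast, hchead⟩ := ihjj (Nat.le_of_succ_le hjj1)
        set m := h - (jj + 1) with hm
        have hm1 : m + 1 = h - jj := by omega
        have hmh : m < h := by omega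
        set iF : Fin h := ⟨m, hmh⟩ with hiF
        have hxiF : x iF ∈ Jk (m + 1) := Ideal.subset_span ⟨iF, Nat.lt_succ_self m, rfl⟩
        have hsub1 : Jk (m + 1) ≤ c.head.asIdeal := by rw [hm1]; exact hchead.1.2
        have hle : Jk m ≤ c.head.asIdeal := le_trans (hJkmono m) hsub1
        obtain ⟨q, hqmin, hqle⟩ := Ideal.exists_minimalPrimes_le (J := c.head.asIdeal) hle
        haveI : q.IsPrime := hqmin.1.1
        have hxq : x iF ∉ q := by
          have hset : {j : Fin h | j < iF} = {j : Fin h | (j : ℕ) < m} := by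
            ext j; exact Iff.rfl
          refine hav iF q ?_
          rw [hset]
          exact hqmin
        have hstrict : (⟨q, hqmin.1.1⟩ : PrimeSpectrum R) < c.head := by
          refine lt_of_le_of_ne ((PrimeSpectrum.asIdeal_le_asIdeal _ _).mp hqle) ?_
          intro hcontr
          apply hxq
          have h9 : q = c.head.asIdeal := congrArg PrimeSpectrum.asIdeal hcontr
          rw [h9]
          exact hsub1 hxiF
        refine ⟨c.cons _ hstrict, ?_, ?_, ?_⟩
        · rw [RelSeries.cons_length, hclen]
        · rw [RelSeries.last_cons]; exact hclast
        · rw [RelSeries.head_cons]; exact hqmin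
    obtain ⟨c, hclen, hclast, _⟩ := D h le_rfl
    have := Order.length_le_height hclast
    rw [hclen] at this
    exact this
end
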